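/- arXiv:1911.11451 — 5 statements merged into one kernel-verified Lean document; each statement's English description precedes it below -/
import Mathlib

section
/- For independent random variables X₁,…,Xₙ with values in [0,1], X = ∑ᵢ Xᵢ, and 0 ≤ ε ≤ 1, it holds that Pr[X ≥ (1+ε)E[X]] ≤ exp(−ε² E[X] / 3). -/
/-!
Chernoff's method with `t = log (1 + ε)`. By convexity of `exp`, a `[0,1]`-valued `Y` satisfies
`exp (t * Y) ≤ 1 + Y * (exp t - 1)`, so `mgf Y t ≤ exp (E[Y] * (exp t - 1))`; by independence
these bounds multiply, and Markov's inequality for `exp (t * X)` gives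
`Pr[X ≥ (1+ε)E[X]] ≤ exp ((ε - (1+ε) log (1+ε)) E[X])`. It remains to use
`ε + ε²/3 ≤ (1+ε) log (1+ε)` on `[0,1]`.
-/

open MeasureTheory ProbabilityTheory Real Set

namespace Real

-- After `log (1 + x) ≥ 2x / (x + 2)`, what remains is `x³ ≤ x²`.
lemma add_sq_div_three_le_one_add_mul_log_one_add {x : ℝ} (hx0 : 0 ≤ x) (hx1 : x ≤ 1) :
    x + x ^ 2 / 3 ≤ (1 + x) * log (1 + x) :=
  calc x + x ^ 2 / 3 ≤ (1 + x) * (2 * x / (x + 2)) := by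
        rw [mul_div_assoc', le_div_iff₀ (by positivity)]
        nlinarith [mul_nonneg (sq_nonneg x) (sub_nonneg.2 hx1)]
    _ ≤ (1 + x) * log (1 + x) := by gcongr; exact le_log_one_add_of_nonneg hx0

lemma exp_mul_le_one_add_mul_exp_sub_one {x : ℝ} (hx : x ∈ Icc 0 1) (t : ℝ) :
    exp (t * x) ≤ 1 + x * (exp t - 1) := by
  have := convexOn_exp.2 (mem_univ 0) (mem_univ t) (sub_nonneg.2 hx.2) hx.1 (by ring)
  simp only [smul_eq_mul, mul_zero, zero_add, exp_zero, mul_one] at this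
  rw [mul_comm t x]
  linarith

end Real

namespace ProbabilityTheory

variable {Ω ι : Type*} {m : MeasurableSpace Ω} {μ : Measure Ω}

lemma mgf_le_exp_integral_mul_exp_sub_one [IsProbabilityMeasure μ] {X : Ω → ℝ}
    (hX : AEMeasurable X μ) (hX01 : ∀ᵐ ω ∂μ, X ω ∈ Icc 0 1) (t : ℝ) :
    mgf X μ t ≤ exp ((∫ ω, X ω ∂μ) * (exp t - 1)) := by
  have hint : Integrable X μ := .of_mem_Icc 0 1 hX hX01
  calc mgf X μ t ≤ ∫ ω, 1 + X ω * (exp t - 1) ∂μ := by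
        refine integral_mono_of_nonneg (ae_of_all _ fun ω => (exp_pos _).le)
          ((integrable_const 1).add (hint.mul_const _)) ?_
        filter_upwards [hX01] with ω hω using exp_mul_le_one_add_mul_exp_sub_one hω t
    _ = 1 + (∫ ω, X ω ∂μ) * (exp t - 1) := by
        rw [integral_add (integrable_const 1) (hint.mul_const _), integral_mul_const]
        simp
    _ ≤ exp ((∫ ω, X ω ∂μ) * (exp t - 1)) := by
        linarith [add_one_le_exp ((∫ ω, X ω ∂μ) * (exp t - 1))]

lemma iIndepFun.mgf_sum_le_exp_integral_mul_exp_sub_one {X : ι → Ω → ℝ}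
    (h_indep : iIndepFun X μ) (h_meas : ∀ i, Measurable (X i))
    (h01 : ∀ i, ∀ᵐ ω ∂μ, X i ω ∈ Icc 0 1) (s : Finset ι) (t : ℝ) :
    mgf (∑ i ∈ s, X i) μ t ≤ exp ((∫ ω, ∑ i ∈ s, X i ω ∂μ) * (exp t - 1)) := by
  have := h_indep.isProbabilityMeasure
  rw [h_indep.mgf_sum h_meas, integral_finsetSum _
    fun i _ => .of_mem_Icc 0 1 (h_meas i).aemeasurable (h01 i), Finset.sum_mul, exp_sum]
  exact Finset.prod_le_prod (fun i _ => mgf_nonneg)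
    fun i _ => mgf_le_exp_integral_mul_exp_sub_one (h_meas i).aemeasurable (h01 i) t

/-- The multiplicative Chernoff bound `Pr[X ≥ (1+ε)E[X]] ≤ (e^ε / (1+ε)^(1+ε))^E[X]`. -/
lemma iIndepFun.measureReal_sum_ge_le_exp {X : ι → Ω → ℝ}
    (h_indep : iIndepFun X μ) (h_meas : ∀ i, Measurable (X i))
    (h01 : ∀ i, ∀ᵐ ω ∂μ, X i ω ∈ Icc 0 1) (s : Finset ι) {ε : ℝ} (hε : 0 ≤ ε) :
    μ.real {ω | (1 + ε) * (∫ ω, ∑ i ∈ s, X i ω ∂μ) ≤ ∑ i ∈ s, X i ω}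
      ≤ exp ((ε - (1 + ε) * log (1 + ε)) * ∫ ω, ∑ i ∈ s, X i ω ∂μ) := by
  have := h_indep.isProbabilityMeasure
  set t := log (1 + ε)
  have ht : 0 ≤ t := log_nonneg (by linarith)
  have hexp_t : exp t = 1 + ε := exp_log (by linarith)
  have h_int : Integrable (fun ω => exp (t * (∑ i ∈ s, X i) ω)) μ :=
    h_indep.integrable_exp_mul_sum h_meas
      fun i _ => integrable_exp_mul_of_mem_Icc (h_meas i).aemeasurable (h01 i)
  have h_tail := measure_ge_le_exp_mul_mgf ((1 + ε) * ∫ ω, ∑ i ∈ s, X i ω ∂μ) ht h_int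
  simp only [Finset.sum_apply] at h_tail
  calc _ ≤ _ := h_tail
    _ ≤ exp (-t * ((1 + ε) * ∫ ω, ∑ i ∈ s, X i ω ∂μ))
          * exp ((∫ ω, ∑ i ∈ s, X i ω ∂μ) * (exp t - 1)) := by
        gcongr
        simpa only [Finset.sum_apply] using
          h_indep.mgf_sum_le_exp_integral_mul_exp_sub_one h_meas h01 s t
    _ = _ := by rw [← exp_add, hexp_t]; ring_nf

end ProbabilityTheory

theorem chernoff_bound_simplified_general {Ω : Type*} [MeasureSpace Ω]
    (n : ℕ) (X : Fin n → Ω → ℝ) (hmeas : ∀ i, Measurable (X i))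
    (hind : iIndepFun X ℙ)
    (hmem : ∀ i ω, X i ω ∈ Set.Icc (0 : ℝ) 1)
    (ε : ℝ) (hε0 : 0 ≤ ε) (hε1 : ε ≤ 1) :
    (ℙ {ω | (1 + ε) * (∫ ω, ∑ i, X i ω ∂ℙ) ≤ ∑ i, X i ω}).toReal
      ≤ Real.exp (-(ε ^ 2 * (∫ ω, ∑ i, X i ω ∂ℙ)) / 3) := by
  have hE : 0 ≤ ∫ ω, ∑ i, X i ω ∂ℙ :=
    integral_nonneg fun ω => Finset.sum_nonneg fun i _ => (hmem i ω).1
  have hlog := add_sq_div_three_le_one_add_mul_log_one_add hε0 hε1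
  calc _ ≤ exp ((ε - (1 + ε) * log (1 + ε)) * ∫ ω, ∑ i, X i ω ∂ℙ) :=
        hind.measureReal_sum_ge_le_exp hmeas (fun i => ae_of_all _ (hmem i)) Finset.univ hε0
    _ ≤ _ := by gcongr; nlinarith

/-- Simplified multiplicative Chernoff bound: for independent random variables with
values in `[0,1]`, `X = ∑ᵢ Xᵢ` and `0 ≤ ε ≤ 1`,
`Pr[X ≥ (1+ε)E[X]] ≤ exp(−ε² E[X] / 3)`. -/
theorem chernoff_bound_simplified {Ω : Type*} [MeasureSpace Ω]
    [IsProbabilityMeasure (ℙ : Measure Ω)]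
    (n : ℕ) (X : Fin n → Ω → ℝ) (hmeas : ∀ i, Measurable (X i))
    (hind : iIndepFun X ℙ)
    (hmem : ∀ i ω, X i ω ∈ Set.Icc (0 : ℝ) 1)
    (ε : ℝ) (hε0 : 0 ≤ ε) (hε1 : ε ≤ 1) :
    (ℙ {ω | (1 + ε) * (∫ ω, ∑ i, X i ω ∂ℙ) ≤ ∑ i, X i ω}).toReal
      ≤ Real.exp (-(ε ^ 2 * (∫ ω, ∑ i, X i ω ∂ℙ)) / 3) :=
  chernoff_bound_simplified_general n X hmeas hind hmem ε hε0 hε1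
end

section
/- Let f : 2^V → ℝ≥0 be a monotone submodular function with f(∅) = 0, let OPT be any set of at most k_opt elements, and let X₀ = ∅, X₁, …, X_k be the sets produced by greedily adding in each step an element maximizing the marginal gain over all of V. Then f(X_k) ≥ (1 − (1 − 1/k_opt)^k) · f(OPT). -/
/-!
Write `g i = f OPT - f (X i)` for the gap to the optimum. By submodularity, adding the elements
of `OPT` one at a time to `X i` gains at most the sum of their individual marginal gains, each of
which is at most the greedy gain `f (X (i+1)) - f (X i)`; monotonicity then gives
`g i ≤ k_opt · (g i - g (i+1))`, i.e. `g (i+1) ≤ (1 - 1/k_opt) · g i`, and iterating yields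
`g k ≤ (1 - 1/k_opt)^k · g 0 ≤ (1 - 1/k_opt)^k · f OPT`.
-/

open Finset

lemma le_one_sub_one_div_mul_of_le_mul_sub {a b : ℝ} {n : ℕ} (hba : b ≤ a)
    (h : a ≤ n * (a - b)) : b ≤ (1 - 1 / n) * a := by
  rcases Nat.eq_zero_or_pos n with rfl | hn
  · -- `1 / (0 : ℝ) = 0`, so the claim degenerates to `hba`.
    simpa using hba
  · have hn' : (0 : ℝ) < n := Nat.cast_pos.mpr hn
    rw [sub_mul, one_mul, div_mul_eq_mul_div, one_mul, le_sub_iff_add_le, ← le_sub_iff_add_le',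
      div_le_iff₀ hn']
    linarith

section Greedy

variable {ι : Type*} [DecidableEq ι]

def marginalGain (f : Finset ι → ℝ) (S : Finset ι) (v : ι) : ℝ :=
  f (insert v S) - f S

def IsSubmodular (f : Finset ι → ℝ) : Prop :=
  ∀ S T : Finset ι, S ⊆ T → ∀ x ∉ T, marginalGain f T x ≤ marginalGain f S x

variable {f : Finset ι → ℝ}

lemma marginalGain_nonneg (hf : Monotone f) (S : Finset ι) (v : ι) : 0 ≤ marginalGain f S v :=
  sub_nonneg.mpr (hf (subset_insert v S))

lemma le_add_sum_marginalGain (hf : Monotone f) (hsub : IsSubmodular f) (S T : Finset ι) :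
    f (S ∪ T) ≤ f S + ∑ v ∈ T, marginalGain f S v := by
  induction T using Finset.induction_on with
  | empty => simp
  | @insert a T ha ih =>
    rw [sum_insert ha, union_insert]
    by_cases haST : a ∈ S ∪ T
    · rw [insert_eq_of_mem haST]
      linarith [marginalGain_nonneg hf S a]
    · have : f (insert a (S ∪ T)) - f (S ∪ T) ≤ marginalGain f S a :=
        hsub S (S ∪ T) subset_union_left a haST
      linarith

lemma sub_le_card_mul_marginalGain (hf : Monotone f) (hsub : IsSubmodular f)
    {S OPT : Finset ι} {y : ι} (hy : ∀ v ∈ OPT, marginalGain f S v ≤ marginalGain f S y) :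
    f OPT - f S ≤ OPT.card * marginalGain f S y :=
  calc f OPT - f S ≤ f (S ∪ OPT) - f S := by gcongr; exact hf subset_union_right
    _ ≤ ∑ v ∈ OPT, marginalGain f S v := by linarith [le_add_sum_marginalGain hf hsub S OPT]
    _ ≤ ∑ _v ∈ OPT, marginalGain f S y := sum_le_sum hy
    _ = OPT.card * marginalGain f S y := by rw [sum_const, nsmul_eq_mul]

lemma greedy_gap_le_geom (hf : Monotone f) (hsub : IsSubmodular f)
    {OPT : Finset ι} {n : ℕ} (hcard : OPT.card ≤ n) {X : ℕ → Finset ι} {x : ℕ → ι}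
    (hstep : ∀ i, X (i + 1) = insert (x i) (X i))
    (hgreedy : ∀ i, ∀ v ∈ OPT, marginalGain f (X i) v ≤ marginalGain f (X i) (x i))
    (k : ℕ) :
    f OPT - f (X k) ≤ (1 - 1 / n : ℝ) ^ k * (f OPT - f (X 0)) := by
  refine le_geom (u := fun i => f OPT - f (X i)) (Nat.one_sub_one_div_cast_nonneg n) k
    fun i _ => ?_
  have hgain : f (X (i + 1)) - f (X i) = marginalGain f (X i) (x i) := by
    rw [hstep]; rfl
  apply le_one_sub_one_div_mul_of_le_mul_sub
  · linarith [marginalGain_nonneg hf (X i) (x i)]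
  · calc f OPT - f (X i) ≤ OPT.card * marginalGain f (X i) (x i) :=
          sub_le_card_mul_marginalGain hf hsub (hgreedy i)
      _ ≤ n * marginalGain f (X i) (x i) := by
          gcongr
          exact marginalGain_nonneg hf (X i) (x i)
      _ = n * (f OPT - f (X i) - (f OPT - f (X (i + 1)))) := by rw [← hgain]; ring

end Greedy

theorem greedy_submodular_guarantee_general {ι : Type*} [DecidableEq ι]
    (V : Finset ι) (f : Finset ι → ℝ)
    (hnonneg : ∀ S, 0 ≤ f S)
    (hmono : ∀ S T : Finset ι, S ⊆ T → f S ≤ f T)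
    (hsub : ∀ S T : Finset ι, S ⊆ T → ∀ x ∉ T,
      f (insert x T) - f T ≤ f (insert x S) - f S)
    (kopt : ℕ)
    (OPT : Finset ι) (hOPTV : OPT ⊆ V) (hOPTcard : OPT.card ≤ kopt)
    (X : ℕ → Finset ι) (x : ℕ → ι)
    (hstep : ∀ i, X (i + 1) = insert (x i) (X i))
    (hgreedy : ∀ i, ∀ v ∈ V,
      f (insert v (X i)) - f (X i) ≤ f (insert (x i) (X i)) - f (X i))
    (k : ℕ) :
    (1 - (1 - 1 / (kopt : ℝ)) ^ k) * f OPT ≤ f (X k) := by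
  have hgap := greedy_gap_le_geom (fun _ _ => hmono _ _) hsub hOPTcard hstep
    (fun i v hv => hgreedy i v (hOPTV hv)) k
  have hpow : 0 ≤ (1 - 1 / (kopt : ℝ)) ^ k :=
    pow_nonneg (Nat.one_sub_one_div_cast_nonneg kopt) k
  linarith [mul_nonneg hpow (hnonneg (X 0)), mul_sub ((1 - 1 / (kopt : ℝ)) ^ k) (f OPT) (f (X 0))]

/-- Classical greedy guarantee of Nemhauser–Wolsey–Fisher: if `f` is a nonnegative
monotone submodular set function with `f ∅ = 0`, `OPT` has at most `k_opt` elements,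
and `X₀ = ∅, X₁, …` is built by greedily adding an element of `V` with maximal
marginal gain, then `f(X_k) ≥ (1 − (1 − 1/k_opt)^k) · f(OPT)`. -/
theorem greedy_submodular_guarantee {ι : Type*} [DecidableEq ι]
    (V : Finset ι) (f : Finset ι → ℝ)
    (hnonneg : ∀ S, 0 ≤ f S)
    (hmono : ∀ S T : Finset ι, S ⊆ T → f S ≤ f T)
    (hsub : ∀ S T : Finset ι, S ⊆ T → ∀ x ∉ T,
      f (insert x T) - f T ≤ f (insert x S) - f S)
    (hempty : f ∅ = 0)
    (kopt : ℕ) (hkopt : 0 < kopt)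
    (OPT : Finset ι) (hOPTV : OPT ⊆ V) (hOPTcard : OPT.card ≤ kopt)
    (X : ℕ → Finset ι) (x : ℕ → ι)
    (hX0 : X 0 = ∅)
    (hstep : ∀ i, X (i + 1) = insert (x i) (X i))
    (hxV : ∀ i, x i ∈ V)
    (hgreedy : ∀ i, ∀ v ∈ V,
      f (insert v (X i)) - f (X i) ≤ f (insert (x i) (X i)) - f (X i))
    (k : ℕ) :
    (1 - (1 - 1 / (kopt : ℝ)) ^ k) * f OPT ≤ f (X k) :=
  greedy_submodular_guarantee_general V f hnonneg hmono hsub kopt OPT hOPTV hOPTcard X x hstep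
    hgreedy k
end

section
/- Let a > 0, δ ≥ 0, α ∈ (0,1), B > 0 real, k_opt = ⌊B/a⌋, and define ε(k) = √(3δk ln(1/α))/a. Suppose k* is a positive integer with k* + ε(k*) ≤ k_opt. Then k_opt < (k*+1) + ε(k*+1) whenever k* is maximal with this property, and for any monotone submodular f with f(∅)=0 and greedy sequence (X_i) (as in the Nemhauser–Wolsey–Fisher setting with optimum OPT of size k_opt), f(X_{k*}) ≥ (1 − (1/e)·exp((1+ε(k*+1))/(k*+1+ε(k*+1)))) · f(OPT). -/
/-- Approximation guarantee of the greedy algorithm under the Chernoff-bound surrogate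
with uniform IID weights: if `k*` is maximal with `k* + ε(k*) ≤ k_opt = ⌊B/a⌋`, then
`k_opt < (k*+1) + ε(k*+1)`, and assuming the Nemhauser–Wolsey–Fisher greedy guarantee,
`f(X_{k*}) ≥ (1 − (1/e)·exp((1+ε(k*+1))/(k*+1+ε(k*+1)))) · f(OPT)`. -/
theorem greedy_chernoff_guarantee {ι : Type*} [DecidableEq ι]
    (a δ α B : ℝ) (ha : 0 < a) (hδ : 0 ≤ δ) (hα0 : 0 < α) (hα1 : α < 1) (hB : 0 < B)
    (kopt : ℕ) (hkopt : kopt = ⌊B / a⌋₊) (hkopt1 : 1 ≤ kopt)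
    (eps : ℕ → ℝ)
    (heps : ∀ k : ℕ, eps k = Real.sqrt (3 * δ * k * Real.log (1 / α)) / a)
    (kstar : ℕ) (hkstar : 0 < kstar)
    (hfeas : (kstar : ℝ) + eps kstar ≤ kopt)
    (hmax : ∀ k : ℕ, kstar < k → (kopt : ℝ) < k + eps k)
    (f : Finset ι → ℝ) (OPT : Finset ι) (hOPT : 0 ≤ f OPT)
    (X : ℕ → Finset ι)
    (hgreedybound : ∀ k : ℕ, (1 - (1 - 1 / (kopt : ℝ)) ^ k) * f OPT ≤ f (X k)) :
    (kopt : ℝ) < ((kstar : ℝ) + 1) + eps (kstar + 1) ∧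
      (1 - (1 / Real.exp 1) *
          Real.exp ((1 + eps (kstar + 1)) / ((kstar : ℝ) + 1 + eps (kstar + 1)))) * f OPT
        ≤ f (X kstar) := by
  have hε : 0 ≤ eps (kstar + 1) := by
    rw [heps]; positivity
  have h1 : (kopt : ℝ) < ((kstar : ℝ) + 1) + eps (kstar + 1) := by
    have := hmax (kstar + 1) (Nat.lt_succ_self _)
    push_cast at this
    linarith
  refine ⟨h1, ?_⟩
  set β : ℝ := (kstar : ℝ) + 1 + eps (kstar + 1) with hβ
  have hβpos : 0 < β := by positivity
  have hkopt0 : (1 : ℝ) ≤ kopt := by exact_mod_cast hkopt1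
  have hkoptpos : (0 : ℝ) < kopt := by linarith
  have hβk : (kopt : ℝ) ≤ β := le_of_lt h1
  have hquot : 1 - 1 / (kopt : ℝ) ≤ Real.exp (-(1 / β)) := by
    have h2 : 1 - 1 / β ≤ Real.exp (-(1 / β)) := by
      have := Real.add_one_le_exp (-(1 / β)); linarith
    have h3 : 1 / β ≤ 1 / (kopt : ℝ) := by
      apply one_div_le_one_div_of_le hkoptpos hβk
    linarith
  have hnn : 0 ≤ 1 - 1 / (kopt : ℝ) := by
    have : 1 / (kopt : ℝ) ≤ 1 := by
      rw [div_le_one hkoptpos]; exact hkopt0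
    linarith
  have hpow : (1 - 1 / (kopt : ℝ)) ^ kstar ≤ Real.exp (-((kstar : ℝ) / β)) := by
    calc (1 - 1 / (kopt : ℝ)) ^ kstar ≤ (Real.exp (-(1 / β))) ^ kstar :=
          pow_le_pow_left₀ hnn hquot _
      _ = Real.exp ((kstar : ℝ) * (-(1 / β))) := (Real.exp_nat_mul _ _).symm
      _ = Real.exp (-((kstar : ℝ) / β)) := by ring_nf
  have hexp : (1 / Real.exp 1) * Real.exp ((1 + eps (kstar + 1)) / β)
      = Real.exp (-((kstar : ℝ) / β)) := by
    rw [one_div, ← Real.exp_neg, ← Real.exp_add]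
    congr 1
    field_simp
    ring
  have hgb := hgreedybound kstar
  have hle : (1 - (1 / Real.exp 1) * Real.exp ((1 + eps (kstar + 1)) / β)) * f OPT
      ≤ (1 - (1 - 1 / (kopt : ℝ)) ^ kstar) * f OPT := by
    apply mul_le_mul_of_nonneg_right _ hOPT
    rw [hexp]; linarith
  linarith
end

section
/- Let a > 0, δ ≥ 0, α ∈ (0,1). Define ε(k) = √(3δk ln(1/α))/a. Suppose B = B(n) → ∞ as n → ∞, k_opt = ⌊B/a⌋, and k*(n) is the largest integer k with k + ε(k) ≤ k_opt. Then k*(n) → ∞ and the approximation factor 1 − (1/e)·exp((1+ε(k*+1))/(k*+1+ε(k*+1))) converges to 1 − 1/e as n → ∞. -/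
open Filter Topology

/-!
Since `ε(k) = O(√k) = o(k)`, the ratio `(1 + ε(k+1)) / (k + 1 + ε(k+1))`, which equals
`(1/(k+1) + ε(k+1)/(k+1)) / (1 + ε(k+1)/(k+1))`, tends to `0` as `k → ∞`, and
the approximation factor is a continuous function of it taking the value `1 - 1/e` at `0`. It
remains to see `k* → ∞`: by maximality, `k* < M` forces `k_opt < M + ε(M)`, which fails once
the budget is large.
-/

lemma Real.tendsto_sqrt_mul_div_atTop (c : ℝ) :
    Tendsto (fun x : ℝ => √(c * x) / x) atTop (𝓝 0) := by
  have h : Tendsto (fun x : ℝ => √c * (√x)⁻¹) atTop (𝓝 (√c * 0)) :=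
    (tendsto_inv_atTop_zero.comp Real.tendsto_sqrt_atTop).const_mul _
  rw [mul_zero] at h
  refine h.congr' ?_
  filter_upwards [eventually_ge_atTop 0] with x hx
  rw [Real.sqrt_mul' c hx, mul_div_assoc, Real.sqrt_div_self', one_div]

lemma tendsto_one_add_div_add_nhds_zero {ι : Type*} {l : Filter ι} {f g : ι → ℝ}
    (hf : Tendsto f l atTop) (hgf : Tendsto (fun i => g i / f i) l (𝓝 0)) :
    Tendsto (fun i => (1 + g i) / (f i + g i)) l (𝓝 0) := by
  have h : Tendsto (fun i => (f i)⁻¹ + g i / f i) l (𝓝 (0 + 0)) :=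
    tendsto_inv_atTop_zero.comp hf |>.add hgf
  have h' := h.div (tendsto_const_nhds.add hgf) (by norm_num : (1 : ℝ) + 0 ≠ 0)
  rw [add_zero, zero_div] at h'
  refine h'.congr' ?_
  filter_upwards [hf.eventually_ne_atTop 0] with i hi
  simp only [Pi.div_apply]
  field_simp

lemma tendsto_atTop_of_lt_imp_lt {ι : Type*} {l : Filter ι} {m : ι → ℕ} {u : ι → ℝ}
    (g : ℕ → ℝ) (hu : Tendsto u l atTop) (h : ∀ i k, m i < k → u i < g k) :
    Tendsto m l atTop := by
  refine tendsto_atTop.2 fun M => ?_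
  filter_upwards [hu.eventually_ge_atTop (g M)] with i hi
  by_contra! hlt
  exact (h i M hlt).not_ge hi

theorem greedy_chernoff_asymptotic_general (a δ α : ℝ) (ha : 0 < a)
    (eps : ℕ → ℝ)
    (heps : ∀ k : ℕ, eps k = Real.sqrt (3 * δ * k * Real.log (1 / α)) / a)
    (B : ℕ → ℝ) (hB : Tendsto B atTop atTop)
    (kopt : ℕ → ℕ) (hkopt : ∀ n, kopt n = ⌊B n / a⌋₊)
    (kstar : ℕ → ℕ)
    (hmax : ∀ n, ∀ k : ℕ, kstar n < k → (kopt n : ℝ) < k + eps k) :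
    Tendsto kstar atTop atTop ∧
      Tendsto (fun n => 1 - (1 / Real.exp 1) *
          Real.exp ((1 + eps (kstar n + 1)) / ((kstar n : ℝ) + 1 + eps (kstar n + 1))))
        atTop (nhds (1 - 1 / Real.exp 1)) := by
  have hkopt_top : Tendsto (fun n => (kopt n : ℝ)) atTop atTop := by
    simp only [hkopt]
    exact tendsto_natCast_atTop_atTop.comp (tendsto_nat_floor_atTop.comp (hB.atTop_div_const ha))
  have hkstar : Tendsto kstar atTop atTop := tendsto_atTop_of_lt_imp_lt _ hkopt_top hmax
  have hsucc : Tendsto (fun k : ℕ => (k : ℝ) + 1) atTop atTop :=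
    tendsto_natCast_atTop_atTop.atTop_add tendsto_const_nhds
  have heps_div : Tendsto (fun k : ℕ => eps (k + 1) / ((k : ℝ) + 1)) atTop (𝓝 0) := by
    have h := ((Real.tendsto_sqrt_mul_div_atTop (3 * δ * Real.log (1 / α))).comp hsucc).div_const a
    rw [zero_div] at h
    refine h.congr fun k => ?_
    simp only [Function.comp_apply, heps, Nat.cast_succ]
    ring_nf
  have hratio := (tendsto_one_add_div_add_nhds_zero hsucc heps_div).comp hkstar
  have hfactor : Tendsto (fun x : ℝ => 1 - 1 / Real.exp 1 * Real.exp x) (𝓝 0)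
      (𝓝 (1 - 1 / Real.exp 1)) := by
    have hcont : Continuous fun x : ℝ => 1 - 1 / Real.exp 1 * Real.exp x := by fun_prop
    simpa using hcont.tendsto 0
  exact ⟨hkstar, hfactor.comp hratio⟩

/-- Asymptotics of the greedy/Chernoff approximation factor: with constants
`a > 0`, `0 ≤ δ < a`, `α ∈ (0,1)`, budget `B(n) → ∞`, `k_opt(n) = ⌊B(n)/a⌋` and
`k*(n)` the largest integer `k` with `k + ε(k) ≤ k_opt(n)`, we have `k*(n) → ∞`
and the approximation factor `1 − (1/e)·exp((1+ε(k*+1))/(k*+1+ε(k*+1)))` tends to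
`1 − 1/e`. -/
theorem greedy_chernoff_asymptotic (a δ α : ℝ) (ha : 0 < a) (hδ0 : 0 ≤ δ) (hδa : δ < a)
    (hα0 : 0 < α) (hα1 : α < 1)
    (eps : ℕ → ℝ)
    (heps : ∀ k : ℕ, eps k = Real.sqrt (3 * δ * k * Real.log (1 / α)) / a)
    (B : ℕ → ℝ) (hB : Tendsto B atTop atTop)
    (kopt : ℕ → ℕ) (hkopt : ∀ n, kopt n = ⌊B n / a⌋₊)
    (kstar : ℕ → ℕ)
    (hfeas : ∀ n, (kstar n : ℝ) + eps (kstar n) ≤ kopt n)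
    (hmax : ∀ n, ∀ k : ℕ, kstar n < k → (kopt n : ℝ) < k + eps k) :
    Tendsto kstar atTop atTop ∧
      Tendsto (fun n => 1 - (1 / Real.exp 1) *
          Real.exp ((1 + eps (kstar n + 1)) / ((kstar n : ℝ) + 1 + eps (kstar n + 1))))
        atTop (nhds (1 - 1 / Real.exp 1)) :=
  greedy_chernoff_asymptotic_general a δ α ha eps heps B hB kopt hkopt kstar hmax
end

section
/- Let a > 0, δ ∈ [0, a), α ∈ (0,1), B > 0, ε̃(k) = √((1−α)k δ²/(3α))/a, and k_opt = ⌊B/a⌋. If k is a positive integer with k + ε̃(k) ≤ k_opt, then for the set X of the first k items (each with weight independent uniform on [a−δ, a+δ]) it holds that Pr[W(X) > B] ≤ α. -/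
open MeasureTheory ProbabilityTheory

/-- Cantelli's inequality. -/
lemma cantelli {Ω : Type*} [MeasureSpace Ω] [IsProbabilityMeasure (ℙ : Measure Ω)]
    (X : Ω → ℝ) (hX : MemLp X 2 ℙ) (t : ℝ) (ht : 0 < t) :
    (ℙ {ω | t ≤ X ω - ∫ x, X x}).toReal
      ≤ variance X ℙ / (variance X ℙ + t ^ 2) := by
  set m := ∫ x, X x with hm
  set v := variance X ℙ with hv
  have hv0 : 0 ≤ v := variance_nonneg X ℙ
  set u : ℝ := v / t with hu
  have hu0 : 0 ≤ u := div_nonneg hv0 ht.le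
  set Y : Ω → ℝ := fun ω => X ω - m + u with hY
  have hYℒ : MemLp Y 2 ℙ := (hX.sub (memLp_const m)).add (memLp_const u)
  have hY2int : Integrable (fun ω => Y ω ^ 2) ℙ := hYℒ.integrable_sq
  have hXint : Integrable X ℙ := hX.integrable one_le_two
  have hXm2 : Integrable (fun ω => (X ω - m) ^ 2) ℙ := (hX.sub (memLp_const m)).integrable_sq
  have hintY2 : ∫ ω, Y ω ^ 2 = v + u ^ 2 := by
    have hvar : v = ∫ ω, (X ω - m) ^ 2 := by
      rw [hv, variance_eq_integral hX.aemeasurable]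
    have expand : ∀ ω, Y ω ^ 2 = (X ω - m) ^ 2 + (2 * u * (X ω - m) + u ^ 2) := by
      intro ω; simp only [hY]; ring
    have hXm : Integrable (fun ω => X ω - m) ℙ := by
      exact hXint.sub (integrable_const m)
    have h2 : Integrable (fun ω => 2 * u * (X ω - m) + u ^ 2) ℙ := by
      exact (hXm.const_mul (2 * u)).add (integrable_const _)
    rw [integral_congr_ae (Filter.Eventually.of_forall expand),
      integral_add hXm2 h2,
      integral_add (hXm.const_mul (2 * u)) (integrable_const _),
      MeasureTheory.integral_const_mul, integral_sub hXint (integrable_const m)]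
    simp [← hvar, ← hm]
  have markov := mul_meas_ge_le_integral_of_nonneg
    (Filter.Eventually.of_forall fun ω => sq_nonneg (Y ω)) hY2int ((t + u) ^ 2)
  have hsub : {ω | t ≤ X ω - m} ⊆ {ω | (t + u) ^ 2 ≤ Y ω ^ 2} := by
    intro ω hω
    have hx : t ≤ X ω - m := hω
    have h1 : t + u ≤ Y ω := by simp only [hY]; linarith
    exact sq_le_sq' (by simp only [hY]; linarith) h1
  have hmono : (ℙ {ω | t ≤ X ω - m}).toReal ≤ (ℙ {ω | (t + u) ^ 2 ≤ Y ω ^ 2}).toReal :=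
    ENNReal.toReal_mono (measure_ne_top _ _) (measure_mono hsub)
  have htu : 0 < t + u := by positivity
  have key : (ℙ {ω | (t + u) ^ 2 ≤ Y ω ^ 2}).toReal ≤ (v + u ^ 2) / (t + u) ^ 2 := by
    rw [le_div_iff₀ (by positivity)]
    calc (ℙ {ω | (t + u) ^ 2 ≤ Y ω ^ 2}).toReal * (t + u) ^ 2
        = (t + u) ^ 2 * (ℙ {ω | (t + u) ^ 2 ≤ Y ω ^ 2}).toReal := by ring
      _ ≤ ∫ ω, Y ω ^ 2 := by exact_mod_cast markov
      _ = v + u ^ 2 := hintY2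
  have heq : (v + u ^ 2) / (t + u) ^ 2 = v / (v + t ^ 2) := by
    rw [hu]
    have ht' : t ≠ 0 := ht.ne'
    have h2 : 0 < v + t ^ 2 := by positivity
    field_simp
    ring
  calc (ℙ {ω | t ≤ X ω - m}).toReal ≤ (ℙ {ω | (t + u) ^ 2 ≤ Y ω ^ 2}).toReal := hmono
    _ ≤ (v + u ^ 2) / (t + u) ^ 2 := key
    _ = v / (v + t ^ 2) := heq

lemma unif_moments {Ω : Type*} [MeasureSpace Ω] [IsProbabilityMeasure (ℙ : Measure Ω)]
    (a δ : ℝ) (ha : 0 < a) (hδ : 0 < δ) (hδa : δ < a) (X : Ω → ℝ) (hm : Measurable X)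
    (hmap : Measure.map X ℙ
      = (ENNReal.ofReal (2 * δ))⁻¹ • volume.restrict (Set.Icc (a - δ) (a + δ))) :
    MemLp X 2 ℙ ∧ (∫ ω, X ω) = a ∧ variance X ℙ = δ ^ 2 / 3 := by
  have hab : a - δ ≤ a + δ := by linarith
  have h2δ : (0 : ℝ) < 2 * δ := by linarith
  have hae : ∀ᵐ ω ∂(ℙ : Measure Ω), X ω ∈ Set.Icc (a - δ) (a + δ) := by
    rw [ae_iff]
    have hset : {ω | ¬ X ω ∈ Set.Icc (a - δ) (a + δ)}
        = X ⁻¹' (Set.Icc (a - δ) (a + δ))ᶜ := rfl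
    rw [hset, ← Measure.map_apply hm measurableSet_Icc.compl, hmap]
    simp [Measure.restrict_apply, measurableSet_Icc.compl]
  have hℒ : MemLp X 2 ℙ := by
    refine MemLp.of_bound hm.aestronglyMeasurable (a + δ) (hae.mono fun ω h => ?_)
    rw [Real.norm_eq_abs, abs_le]
    exact ⟨by linarith [h.1], h.2⟩
  have hcoeff : ((ENNReal.ofReal (2 * δ))⁻¹).toReal = (2 * δ)⁻¹ := by
    rw [ENNReal.toReal_inv, ENNReal.toReal_ofReal h2δ.le]
  have key1 : (∫ y, y ∂(Measure.map X ℙ)) = ∫ ω, X ω :=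
    integral_map hm.aemeasurable aestronglyMeasurable_id
  have key2 : (∫ y, y ^ 2 ∂(Measure.map X ℙ)) = ∫ ω, X ω ^ 2 :=
    integral_map hm.aemeasurable (continuous_pow 2).aestronglyMeasurable
  have hint1 : (∫ ω, X ω) = a := by
    rw [← key1, hmap, integral_smul_measure]
    rw [MeasureTheory.integral_Icc_eq_integral_Ioc, ← intervalIntegral.integral_of_le hab,
      integral_id, hcoeff, smul_eq_mul]
    field_simp
    ring
  have hint2 : (∫ ω, X ω ^ 2) = a ^ 2 + δ ^ 2 / 3 := by
    rw [← key2, hmap, integral_smul_measure]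
    rw [MeasureTheory.integral_Icc_eq_integral_Ioc, ← intervalIntegral.integral_of_le hab,
      integral_pow, hcoeff, smul_eq_mul]
    field_simp
    ring
  refine ⟨hℒ, hint1, ?_⟩
  rw [variance_eq_sub hℒ]
  have : (∫ ω, (X ^ 2) ω) = ∫ ω, X ω ^ 2 := by simp
  rw [this, hint2, hint1]
  ring

/-- Feasibility of the Chebyshev-based surrogate in the uniform IID setting: if the
`k` weights are independent and uniform on `[a−δ, a+δ]` and
`k + ε̃(k) ≤ ⌊B/a⌋` where `ε̃(k) = √((1−α)kδ²/(3α))/a`, then `Pr[W(X) > B] ≤ α`. -/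
theorem chebyshev_surrogate_feasible {Ω : Type*} [MeasureSpace Ω]
    [IsProbabilityMeasure (ℙ : Measure Ω)]
    (a δ α B : ℝ) (ha : 0 < a) (hδ0 : 0 ≤ δ) (hδa : δ < a)
    (hα0 : 0 < α) (hα1 : α < 1) (hB : 0 < B)
    (epst : ℕ → ℝ)
    (hepst : ∀ j : ℕ, epst j = Real.sqrt ((1 - α) * j * δ ^ 2 / (3 * α)) / a)
    (k : ℕ) (hk : 0 < k)
    (hfeas : (k : ℝ) + epst k ≤ (⌊B / a⌋₊ : ℝ))
    (W : Fin k → Ω → ℝ) (hmeas : ∀ s, Measurable (W s))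
    (hind : iIndepFun W ℙ)
    (hunif : ∀ s, Measure.map (W s) ℙ
      = (ENNReal.ofReal (2 * δ))⁻¹ • volume.restrict (Set.Icc (a - δ) (a + δ))) :
    (ℙ {ω | B < ∑ s, W s ω}).toReal ≤ α := by
  -- δ = 0 is impossible
  rcases eq_or_lt_of_le hδ0 with hδ | hδ
  · exfalso
    have s0 : Fin k := ⟨0, hk⟩
    have h1 : Measure.map (W s0) ℙ Set.univ = 1 := by
      rw [Measure.map_apply (hmeas s0) MeasurableSet.univ]
      simp
    rw [hunif s0, ← hδ] at h1
    simp [Measure.smul_apply, Measure.restrict_apply] at h1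
  -- moments
  have hmom := fun s => unif_moments a δ ha hδ hδa (W s) (hmeas s) (hunif s)
  set X : Ω → ℝ := fun ω => ∑ s, W s ω with hX
  have hXℒ : MemLp X 2 ℙ := by
    have : MemLp (∑ s, W s) 2 ℙ := memLp_finset_sum' _ (fun s _ => (hmom s).1)
    convert this using 1
    ext ω; simp [hX]
  have hmean : (∫ x, X x) = k * a := by
    rw [hX]
    rw [integral_finset_sum _ (fun s _ => ((hmom s).1).integrable one_le_two)]
    simp [(fun s => (hmom s).2.1), Finset.card_univ]
  have hvar : variance X ℙ = k * (δ ^ 2 / 3) := by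
    have hXeq : X = ∑ s, W s := by ext ω; simp [hX]
    rw [hXeq, IndepFun.variance_sum (fun s _ => (hmom s).1)
      (fun i _ j _ hij => hind.indepFun hij)]
    simp [(fun s => (hmom s).2.2), Finset.card_univ, mul_comm]
  set v : ℝ := (k : ℝ) * (δ ^ 2 / 3) with hv
  set c : ℝ := (1 - α) * k * δ ^ 2 / (3 * α) with hc
  have hc0 : 0 < c := by
    have hkR : (0 : ℝ) < k := by exact_mod_cast hk
    rw [hc]
    apply div_pos (mul_pos (mul_pos (by linarith) hkR) (by positivity)) (by linarith)
  have hepsk : a * epst k = Real.sqrt c := by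
    rw [hepst k, hc]; field_simp
  set t : ℝ := B - k * a with htdef
  have hta : Real.sqrt c ≤ t := by
    have hfloor : (⌊B / a⌋₊ : ℝ) ≤ B / a := Nat.floor_le (by positivity)
    have : (k : ℝ) + epst k ≤ B / a := hfeas.trans hfloor
    have hmul : a * ((k : ℝ) + epst k) ≤ B := by
      rw [← le_div_iff₀' ha]; exact this
    rw [← hepsk]; rw [mul_add] at hmul; linarith
  have ht : 0 < t := lt_of_lt_of_le (Real.sqrt_pos.mpr hc0) hta
  have hcant := cantelli X hXℒ t ht
  rw [hvar] at hcant
  have hsub : {ω | B < ∑ s, W s ω} ⊆ {ω | t ≤ X ω - ∫ x, X x} := by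
    intro ω hω
    have : B < X ω := hω
    rw [Set.mem_setOf_eq, hmean]
    linarith
  have hmono : (ℙ {ω | B < ∑ s, W s ω}).toReal ≤ (ℙ {ω | t ≤ X ω - ∫ x, X x}).toReal :=
    ENNReal.toReal_mono (measure_ne_top _ _) (measure_mono hsub)
  have ht2 : c ≤ t ^ 2 := by
    nlinarith [Real.sq_sqrt hc0.le, Real.sqrt_nonneg c]
  have hfin : v / (v + t ^ 2) ≤ α := by
    have hv0 : 0 ≤ v := by
      have : (0 : ℝ) ≤ k := Nat.cast_nonneg k
      rw [hv]; positivity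
    have hd : 0 < v + t ^ 2 := by positivity
    rw [div_le_iff₀ hd]
    have hαc : α * c = (1 - α) * v := by
      rw [hc, hv]; field_simp
    nlinarith [mul_le_mul_of_nonneg_left ht2 hα0.le]
  exact hmono.trans (hcant.trans hfin)
end
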